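/- Let G be a graph with a vertex a of degree 2 whose two neighbors are non-adjacent, and suppose a is not a cut vertex of G. Then eliminating a first extends to a minimum fill-in ordering: Φ(G) = 1 + Φ(G_a). -/

import Mathlib

/-!
Eliminating `a` first costs exactly the fill edge `xy` between its two neighbours, so
`Φ(G) ≤ 1 + Φ(G_a)`. For the converse, induct on the number of non-isolated vertices and look at
the first vertex `b` of an optimal ordering, which may be taken non-isolated.
If `b = a` there is nothing to do. If `b` is a neighbour of `a`, say `x`, then `x` has a
neighbour `s ≠ a` because `a` is not a cut vertex; relabelling by the transposition `(a b)` turns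
`G_a` into a subgraph of `G_b` missing only deficiency edges of `b` other than `as`, so exchanging
`a` and `b` in the ordering does not increase the fill.
Otherwise the eliminations of `a` and `b` commute and `D_{G_a}(b) ⊆ D_G(b)`. If `b` is adjacent
to both `x` and `y`, then `a` is simplicial in `G_b` and `xy ∈ D_G(b) \ D_{G_a}(b)`; if not,
`a` keeps its hypotheses in `G_b` (`x` and `y` stay connected off `a`) and induction applies.
-/

open SimpleGraph

attribute [local instance] Classical.propDecidable

variable {V : Type*} [Fintype V] [DecidableEq V]

/-- The elimination graph `G_x`: delete `x` and complete its neighborhood to a clique.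
(The eliminated vertex is kept as an isolated vertex.) -/
def elimG (G : SimpleGraph V) (x : V) : SimpleGraph V where
  Adj u v := u ≠ v ∧ u ≠ x ∧ v ≠ x ∧ (G.Adj u v ∨ (G.Adj x u ∧ G.Adj x v))
  symm := by
    constructor
    intro u v h
    obtain ⟨h1, h2, h3, h4⟩ := h
    refine ⟨h1.symm, h3, h2, ?_⟩
    rcases h4 with h | ⟨h4, h5⟩
    · exact Or.inl h.symm
    · exact Or.inr ⟨h5, h4⟩
  loopless := by constructor; intro v h; exact h.1 rfl

/-- The deficiency `D(x)`: the set of unordered pairs of distinct, non-adjacent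
neighbors of `x`. -/
noncomputable def deficiencyFinset (G : SimpleGraph V) (x : V) : Finset (Sym2 V) :=
  ((Finset.univ ×ˢ Finset.univ : Finset (V × V)).filter
    (fun p => p.1 ≠ p.2 ∧ G.Adj x p.1 ∧ G.Adj x p.2 ∧ ¬ G.Adj p.1 p.2)).image
    (fun p => s(p.1, p.2))

/-- Successive elimination of a list of vertices. -/
def elimList : SimpleGraph V → List V → SimpleGraph V
  | G, [] => G
  | G, x :: xs => elimList (elimG G x) xs

/-- The fill-in of an elimination ordering given as a list: the total number of
edges added during the elimination process. -/
noncomputable def fillList : SimpleGraph V → List V → ℕ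
  | _, [] => 0
  | G, x :: xs => (deficiencyFinset G x).card + fillList (elimG G x) xs

/-- The set of fill edges added during the elimination process. -/
noncomputable def fillEdges : SimpleGraph V → List V → Finset (Sym2 V)
  | _, [] => ∅
  | G, x :: xs => deficiencyFinset G x ∪ fillEdges (elimG G x) xs

/-- A list is an (elimination) ordering if it enumerates every vertex exactly once. -/
def IsOrdering (L : List V) : Prop := L.Nodup ∧ ∀ v : V, v ∈ L

/-- The minimum fill-in `Φ(G)`. -/
noncomputable def minFillIn (G : SimpleGraph V) : ℕ :=
  sInf {n | ∃ L : List V, IsOrdering L ∧ fillList G L = n}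

/-- A vertex is simplicial if its neighborhood is a clique. -/
def IsSimplicial (G : SimpleGraph V) (x : V) : Prop :=
  ∀ a b, G.Adj x a → G.Adj x b → a ≠ b → G.Adj a b

/-- `a` and `b` are indistinguishable: equal closed neighborhoods. -/
def Indistinguishable (G : SimpleGraph V) (a b : V) : Prop :=
  a ≠ b ∧ insert a (G.neighborSet a) = insert b (G.neighborSet b)

/-- `a` and `b` are twins: equal open neighborhoods (hence non-adjacent). -/
def Twins (G : SimpleGraph V) (a b : V) : Prop :=
  a ≠ b ∧ G.neighborSet a = G.neighborSet b

/-- Chordality: no induced cycle of length at least 4, equivalently every cycle of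
length at least 4 has a chord. -/
def IsChordal (G : SimpleGraph V) : Prop :=
  ∀ n : ℕ, 4 ≤ n → ∀ f : ZMod n → V, Function.Injective f →
    ¬ (∀ i j : ZMod n, G.Adj (f i) (f j) ↔ (j = i + 1 ∨ i = j + 1))

/-- `T` is a triangulation of `G`: a set of non-edges whose addition makes `G` chordal. -/
def IsTriangulation (G : SimpleGraph V) (T : Finset (Sym2 V)) : Prop :=
  (∀ e ∈ T, ¬ e.IsDiag ∧ e ∉ G.edgeSet) ∧
    IsChordal (G ⊔ SimpleGraph.fromEdgeSet (↑T : Set (Sym2 V)))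

/-- A minimum triangulation. -/
def IsMinTriangulation (G : SimpleGraph V) (T : Finset (Sym2 V)) : Prop :=
  IsTriangulation G T ∧ ∀ T' : Finset (Sym2 V), IsTriangulation G T' → T.card ≤ T'.card

/-- The graph obtained from `G` by deleting the vertices in `S`
(deleted vertices are kept as isolated vertices). -/
def deleteSet (G : SimpleGraph V) (S : Set V) : SimpleGraph V where
  Adj u v := G.Adj u v ∧ u ∉ S ∧ v ∉ S
  symm := ⟨fun _ _ ⟨h, hu, hv⟩ => ⟨h.symm, hv, hu⟩⟩
  loopless := ⟨fun v h => G.irrefl h.1⟩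

open Finset

omit [Fintype V] [DecidableEq V] in
lemma elimG_adj {G : SimpleGraph V} {p u v : V} :
    (elimG G p).Adj u v ↔
      u ≠ v ∧ u ≠ p ∧ v ≠ p ∧ (G.Adj u v ∨ (G.Adj p u ∧ G.Adj p v)) :=
  Iff.rfl

omit [Fintype V] [DecidableEq V] in
lemma elimG_comm (G : SimpleGraph V) (a b : V) :
    elimG (elimG G a) b = elimG (elimG G b) a := by
  by_cases hab : a = b
  · rw [hab]
  ext u v
  simp only [elimG_adj]
  have := G.adj_comm a b
  grind

omit [Fintype V] [DecidableEq V] in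
lemma elimG_mono {G G' : SimpleGraph V} (h : G ≤ G') (p : V) : elimG G p ≤ elimG G' p := by
  rintro u v ⟨huv, hu, hv, hadj | ⟨hpu, hpv⟩⟩
  exacts [⟨huv, hu, hv, Or.inl (h hadj)⟩, ⟨huv, hu, hv, Or.inr ⟨h hpu, h hpv⟩⟩]

omit [Fintype V] [DecidableEq V] in
lemma support_elimG_subset (G : SimpleGraph V) (p : V) :
    (elimG G p).support ⊆ G.support \ {p} := by
  intro u hu
  obtain ⟨w, -, hup, -, huw | ⟨hpu, -⟩⟩ := (mem_support _).1 hu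
  exacts [⟨(mem_support _).2 ⟨w, huw⟩, hup⟩, ⟨(mem_support _).2 ⟨p, hpu.symm⟩, hup⟩]

omit [Fintype V] [DecidableEq V] in
lemma isIsolated_elimG_self (G : SimpleGraph V) (p : V) : (elimG G p).IsIsolated p :=
  fun _ h => h.2.1 rfl

omit [Fintype V] [DecidableEq V] in
lemma isIsolated_elimG {G : SimpleGraph V} {v : V} (h : G.IsIsolated v) (p : V) :
    (elimG G p).IsIsolated v :=
  fun w ⟨_, _, _, hvw⟩ => hvw.elim (h w) fun hpvw => h p hpvw.1.symm

omit [DecidableEq V] in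
lemma ncard_support_elimG_lt {G : SimpleGraph V} {p : V} (hp : p ∈ G.support) :
    (elimG G p).support.ncard < G.support.ncard :=
  Set.ncard_lt_ncard ((support_elimG_subset G p).trans_ssubset (Set.sdiff_singleton_ssubset.2 hp))

omit [Fintype V] [DecidableEq V] in
lemma elimG_eq_self {G : SimpleGraph V} {p : V} (h : G.IsIsolated p) : elimG G p = G := by
  ext u v
  refine ⟨fun ⟨_, _, _, huv⟩ => huv.resolve_right fun hpuv => h u hpuv.1, fun huv => ?_⟩
  exact ⟨huv.ne, fun hu => h v (hu ▸ huv), fun hv => h u (hv ▸ huv.symm), Or.inl huv⟩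

omit [Fintype V] [DecidableEq V] in
lemma neighborSet_elimG_of_not_adj {G : SimpleGraph V} {a b : V} (hab : ¬ G.Adj a b)
    (hba : b ≠ a) : (elimG G b).neighborSet a = G.neighborSet a \ {b} := by
  ext w
  simp only [mem_neighborSet, elimG_adj, Set.mem_sdiff, Set.mem_singleton_iff, G.adj_comm b a]
  have : G.Adj a w → a ≠ w := G.ne_of_adj
  grind

omit [Fintype V] [DecidableEq V] in
lemma adj_iff_of_neighborSet_eq_pair {G : SimpleGraph V} {a x y : V}
    (hN : G.neighborSet a = {x, y}) (w : V) : G.Adj a w ↔ w = x ∨ w = y := by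
  rw [← mem_neighborSet, hN]
  rfl

omit [Fintype V] [DecidableEq V] in
lemma IsSimplicial.elimG_le {G : SimpleGraph V} {a : V} (h : IsSimplicial G a) :
    elimG G a ≤ G := by
  rintro u v ⟨huv, -, -, hadj | ⟨hau, hav⟩⟩
  exacts [hadj, h u v hau hav huv]

omit [Fintype V] [DecidableEq V] in
lemma reachable_elimG_of_adj_of_adj {G : SimpleGraph V} {p u v : V} (hu : G.Adj p u)
    (hv : G.Adj p v) : (elimG G p).Reachable u v := by
  by_cases huv : u = v
  · exact huv ▸ Reachable.refl u
  · exact Adj.reachable ⟨huv, hu.ne', hv.ne', Or.inr ⟨hu, hv⟩⟩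

omit [Fintype V] [DecidableEq V] in
lemma reachable_elimG {G : SimpleGraph V} {p u v : V} (h : G.Reachable u v) (hu : u ≠ p)
    (hv : v ≠ p) : (elimG G p).Reachable u v := by
  suffices ∀ w, Relation.ReflTransGen G.Adj u w → (w ≠ p → (elimG G p).Reachable u w) ∧
      (w = p → ∃ z, G.Adj p z ∧ (elimG G p).Reachable u z) from
    (this v ((reachable_iff_reflTransGen u v).1 h)).1 hv
  intro w hw
  induction hw with
  | refl => exact ⟨fun _ => Reachable.refl u, fun h => (hu h).elim⟩
  | @tail z w _ hzw ih =>
    refine ⟨fun hw => ?_, fun hw => ⟨z, hw ▸ hzw.symm, ih.1 (hw ▸ hzw.ne)⟩⟩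
    by_cases hz : z = p
    · obtain ⟨t, hpt, hut⟩ := ih.2 hz
      exact hut.trans (reachable_elimG_of_adj_of_adj hpt (hz ▸ hzw))
    · exact (ih.1 hz).trans (Adj.reachable ⟨hzw.ne, hz, hw, Or.inl hzw⟩)

omit [Fintype V] [DecidableEq V] in
lemma elimG_deleteSet_le (G : SimpleGraph V) (S : Set V) (p : V) :
    elimG (deleteSet G S) p ≤ deleteSet (elimG G p) S := by
  rintro u v ⟨huv, hu, hv, ⟨hadj, huS, hvS⟩ | ⟨⟨hpu, -, huS⟩, ⟨hpv, -, hvS⟩⟩⟩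
  exacts [⟨⟨huv, hu, hv, Or.inl hadj⟩, huS, hvS⟩,
    ⟨⟨huv, hu, hv, Or.inr ⟨hpu, hpv⟩⟩, huS, hvS⟩]

lemma mk_mem_deficiencyFinset {G : SimpleGraph V} {p u v : V} :
    s(u, v) ∈ deficiencyFinset G p ↔ u ≠ v ∧ G.Adj p u ∧ G.Adj p v ∧ ¬ G.Adj u v := by
  simp only [deficiencyFinset, mem_image, mem_filter, mem_product, mem_univ, true_and,
    Prod.exists, Sym2.eq_iff]
  constructor
  · rintro ⟨u', v', h, ⟨rfl, rfl⟩ | ⟨rfl, rfl⟩⟩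
    · exact h
    · exact ⟨h.1.symm, h.2.2.1, h.2.1, fun h' => h.2.2.2 h'.symm⟩
  · exact fun h => ⟨u, v, h, Or.inl ⟨rfl, rfl⟩⟩

lemma deficiencyFinset_eq_empty {G : SimpleGraph V} {p : V} (h : G.IsIsolated p) :
    deficiencyFinset G p = ∅ := by
  refine eq_empty_of_forall_notMem fun e he => ?_
  induction e using Sym2.ind with
  | _ u v => exact h u (mk_mem_deficiencyFinset.1 he).2.1

lemma deficiencyFinset_eq_singleton {G : SimpleGraph V} {a x y : V}
    (hN : G.neighborSet a = {x, y}) (hxy : x ≠ y) (hnxy : ¬ G.Adj x y) :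
    deficiencyFinset G a = {s(x, y)} := by
  have hadj := adj_iff_of_neighborSet_eq_pair hN
  ext e
  induction e using Sym2.ind with
  | _ u v =>
    rw [mk_mem_deficiencyFinset, mem_singleton, Sym2.eq_iff, hadj, hadj]
    have := G.adj_comm x y
    grind

lemma mem_support_of_mk_mem_fillEdges {K : SimpleGraph V} {L : List V} {u v : V}
    (h : s(u, v) ∈ fillEdges K L) : u ∈ K.support := by
  induction L generalizing K with
  | nil => simp [fillEdges] at h
  | cons p L ih =>
    rcases mem_union.1 h with h | h
    · exact (mem_support K).2 ⟨p, (mk_mem_deficiencyFinset.1 h).2.1.symm⟩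
    · exact (support_elimG_subset K p (ih h)).1

lemma not_adj_of_mk_mem_fillEdges {K : SimpleGraph V} {L : List V} {u v : V}
    (h : s(u, v) ∈ fillEdges K L) : ¬ K.Adj u v := by
  induction L generalizing K with
  | nil => simp [fillEdges] at h
  | cons p L ih =>
    rcases mem_union.1 h with h | h
    · exact (mk_mem_deficiencyFinset.1 h).2.2.2
    · have hu := (support_elimG_subset K p (mem_support_of_mk_mem_fillEdges h)).2
      have hv := (support_elimG_subset K p
        (mem_support_of_mk_mem_fillEdges (Sym2.eq_swap ▸ h))).2
      exact fun huv => ih h ⟨huv.ne, hu, hv, Or.inl huv⟩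

lemma fillList_eq_card_fillEdges (K : SimpleGraph V) (L : List V) :
    fillList K L = #(fillEdges K L) := by
  induction L generalizing K with
  | nil => rfl
  | cons p L ih =>
    rw [fillList, fillEdges, ih, card_union_of_disjoint (disjoint_left.2 fun e he hf => ?_)]
    induction e using Sym2.ind with
    | _ u v =>
      obtain ⟨huv, hpu, hpv, -⟩ := mk_mem_deficiencyFinset.1 he
      exact not_adj_of_mk_mem_fillEdges hf ⟨huv, hpu.ne', hpv.ne', Or.inr ⟨hpu, hpv⟩⟩

lemma coe_fillEdges_subset_of_le {K K' : SimpleGraph V} (h : K' ≤ K) (L : List V) :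
    (fillEdges K' L : Set (Sym2 V)) ⊆ fillEdges K L ∪ (K.edgeSet \ K'.edgeSet) := by
  induction L generalizing K K' with
  | nil => simp [fillEdges]
  | cons p L ih =>
    intro e he
    induction e using Sym2.ind with
    | _ u v =>
      have key := @ih _ _ (elimG_mono h p) s(u, v)
      simp only [fillEdges, coe_union, Set.mem_union, Set.mem_sdiff, mem_coe, mem_edgeSet,
        mk_mem_deficiencyFinset, elimG_adj] at he key ⊢
      have := @h u v
      have := @h p u
      have := @h p v
      grind

lemma fillList_le_of_le {K K' : SimpleGraph V} (h : K' ≤ K) {D : Finset (Sym2 V)}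
    (hD : K.edgeSet \ K'.edgeSet ⊆ D) (L : List V) :
    fillList K' L ≤ fillList K L + #D := by
  rw [fillList_eq_card_fillEdges, fillList_eq_card_fillEdges]
  refine (card_le_card fun e he => ?_).trans (card_union_le _ _)
  rcases coe_fillEdges_subset_of_le h L he with he | he
  exacts [mem_union_left _ he, mem_union_right _ (hD he)]

lemma IsSimplicial.fillList_elimG_le {G : SimpleGraph V} {a : V} (h : IsSimplicial G a)
    (L : List V) : fillList (elimG G a) L ≤ fillList G L := by
  rw [fillList_eq_card_fillEdges, fillList_eq_card_fillEdges]
  refine card_le_card fun e he => ?_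
  refine (coe_fillEdges_subset_of_le h.elimG_le L he).resolve_right fun hE => ?_
  induction e using Sym2.ind with
  | _ u v =>
    have hu := (support_elimG_subset G a (mem_support_of_mk_mem_fillEdges he)).2
    have hv := (support_elimG_subset G a
      (mem_support_of_mk_mem_fillEdges (Sym2.eq_swap ▸ he))).2
    exact hE.2 ⟨hE.1.ne, hu, hv, Or.inl hE.1⟩

omit [Fintype V] [DecidableEq V] in
lemma IsOrdering.perm {L L' : List V} (h : IsOrdering L) (hL : L.Perm L') : IsOrdering L' :=
  ⟨hL.nodup_iff.1 h.1, fun v => hL.mem_iff.1 (h.2 v)⟩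

omit [Fintype V] [DecidableEq V] in
lemma IsOrdering.map {L : List V} (h : IsOrdering L) (σ : V ≃ V) : IsOrdering (L.map σ) :=
  ⟨h.1.map σ.injective, fun v => List.mem_map.2 ⟨σ.symm v, h.2 _, σ.apply_symm_apply v⟩⟩

lemma minFillIn_le {G : SimpleGraph V} {L : List V} (h : IsOrdering L) :
    minFillIn G ≤ fillList G L :=
  Nat.sInf_le ⟨L, h, rfl⟩

lemma exists_isOrdering_fillList_eq_minFillIn (G : SimpleGraph V) :
    ∃ L, IsOrdering L ∧ fillList G L = minFillIn G := by
  have hL : IsOrdering (univ.toList : List V) :=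
    ⟨nodup_toList _, fun v => mem_toList.2 (mem_univ v)⟩
  exact Nat.sInf_mem (s := {n | ∃ L, IsOrdering L ∧ fillList G L = n}) ⟨_, _, hL, rfl⟩

lemma fillList_cons_of_isIsolated {K : SimpleGraph V} {p : V} (h : K.IsIsolated p)
    (L : List V) : fillList K (p :: L) = fillList K L := by
  rw [fillList, deficiencyFinset_eq_empty h, elimG_eq_self h, card_empty, zero_add]

lemma fillList_append_of_isIsolated {K : SimpleGraph V} {P : List V}
    (hP : ∀ v ∈ P, K.IsIsolated v) (L : List V) : fillList K (P ++ L) = fillList K L := by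
  induction P with
  | nil => rfl
  | cons p P ih =>
    rw [List.cons_append, fillList_cons_of_isIsolated (hP p List.mem_cons_self),
      ih fun v hv => hP v (List.mem_cons_of_mem p hv)]

lemma fillList_erase_of_isIsolated {K : SimpleGraph V} {c : V} (h : K.IsIsolated c)
    (L : List V) : fillList K (L.erase c) = fillList K L := by
  induction L generalizing K with
  | nil => rfl
  | cons d L ih =>
    by_cases hd : d = c
    · rw [hd, List.erase_cons_head, fillList_cons_of_isIsolated h]
    · rw [List.erase_cons_tail (by simpa using hd), fillList, fillList,
        ih (isIsolated_elimG h d)]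

lemma minFillIn_le_card_deficiencyFinset_add (G : SimpleGraph V) (c : V) :
    minFillIn G ≤ #(deficiencyFinset G c) + minFillIn (elimG G c) := by
  obtain ⟨L, hL, hfill⟩ := exists_isOrdering_fillList_eq_minFillIn (elimG G c)
  calc minFillIn G ≤ fillList G (c :: L.erase c) :=
        minFillIn_le (hL.perm (List.perm_cons_erase (hL.2 c)))
    _ = _ := by
      rw [fillList, fillList_erase_of_isIsolated (isIsolated_elimG_self G c), hfill]

lemma minFillIn_elimG_le_fillList {G : SimpleGraph V} {b : V} {L : List V}
    (h : IsOrdering (b :: L)) : minFillIn (elimG G b) ≤ fillList (elimG G b) L :=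
  (minFillIn_le h).trans_eq (fillList_cons_of_isIsolated (isIsolated_elimG_self G b) L)

lemma IsSimplicial.minFillIn_elimG_le {G : SimpleGraph V} {a : V} (h : IsSimplicial G a) :
    minFillIn (elimG G a) ≤ minFillIn G := by
  obtain ⟨L, hL, hfill⟩ := exists_isOrdering_fillList_eq_minFillIn G
  exact (minFillIn_le hL).trans (hfill ▸ h.fillList_elimG_le L)

lemma exists_minFillIn_eq_fillList_cons {G : SimpleGraph V} (hG : G.support.Nonempty) :
    ∃ b L, IsOrdering (b :: L) ∧ fillList G (b :: L) = minFillIn G ∧ b ∈ G.support := by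
  obtain ⟨L, hL, hfill⟩ := exists_isOrdering_fillList_eq_minFillIn G
  obtain ⟨b, hfind⟩ : ∃ b, L.find? (· ∈ G.support) = some b := by
    refine Option.ne_none_iff_exists'.1 fun hnone => ?_
    obtain ⟨v, hv⟩ := hG
    exact List.find?_eq_none.1 hnone v (hL.2 v) (by simpa using hv)
  obtain ⟨hb, P, M, rfl, hP⟩ := List.find?_eq_some_iff_append.1 hfind
  replace hP : ∀ v ∈ P, G.IsIsolated v := by simpa using hP
  refine ⟨b, P ++ M, hL.perm List.perm_middle, ?_, by simpa using hb⟩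
  rw [← hfill, fillList_append_of_isIsolated hP, fillList, fillList,
    fillList_append_of_isIsolated fun v hv => isIsolated_elimG (hP v hv) b]

def elimGIso {G G' : SimpleGraph V} (e : G ≃g G') (p : V) : elimG G p ≃g elimG G' (e p) where
  toEquiv := e.toEquiv
  map_rel_iff' {u v} := by simp [elimG_adj, e.map_adj_iff, e.injective.ne_iff]

lemma card_deficiencyFinset_iso {G G' : SimpleGraph V} (e : G ≃g G') (p : V) :
    #(deficiencyFinset G' (e p)) = #(deficiencyFinset G p) := by
  rw [← card_image_of_injective (deficiencyFinset G p) (Sym2.map.injective e.injective)]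
  congr 1
  ext f
  induction f using Sym2.ind with
  | _ u v =>
    obtain ⟨u, rfl⟩ := e.surjective u
    obtain ⟨v, rfl⟩ := e.surjective v
    conv_rhs => rw [← Sym2.map_mk, (Sym2.map.injective e.injective).mem_finset_image]
    simp [mk_mem_deficiencyFinset, e.map_adj_iff, e.injective.ne_iff]

lemma fillList_map_iso {G G' : SimpleGraph V} (e : G ≃g G') (L : List V) :
    fillList G' (L.map e) = fillList G L := by
  induction L generalizing G G' with
  | nil => rfl
  | cons p L ih =>
    rw [List.map_cons, fillList, fillList, card_deficiencyFinset_iso, ← ih (elimGIso e p)]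
    rfl

omit [Fintype V] in
lemma comap_swap_elimG_le {G : SimpleGraph V} {a b c : V} (hN : G.neighborSet a = {b, c}) :
    (elimG G a).comap (Equiv.swap a b) ≤ elimG G b := by
  have hadj := adj_iff_of_neighborSet_eq_pair hN
  intro u v huv
  simp only [comap_adj, elimG_adj, Equiv.swap_apply_def] at huv ⊢
  have hsymm : ∀ x y, G.Adj x y → G.Adj y x := fun _ _ h => h.symm
  have := G.loopless.irrefl
  split_ifs at huv <;> grind

lemma edgeSet_elimG_sdiff_subset {G : SimpleGraph V} {a b c s : V}
    (hN : G.neighborSet a = {b, c}) (hbs : G.Adj b s) (hsa : s ≠ a) :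
    (elimG G b).edgeSet \ ((elimG G a).comap (Equiv.swap a b)).edgeSet ⊆
      ↑((deficiencyFinset G b).erase s(a, s)) := by
  have hadj := adj_iff_of_neighborSet_eq_pair hN
  have has : ((elimG G a).comap (Equiv.swap a b)).Adj a s := by
    rw [comap_adj, Equiv.swap_apply_left, Equiv.swap_apply_of_ne_of_ne hsa hbs.ne']
    exact ⟨hbs.ne, ((hadj b).2 (Or.inl rfl)).ne', hsa, Or.inl hbs⟩
  intro e he
  induction e using Sym2.ind with
  | _ u v =>
    simp only [Set.mem_sdiff, mem_edgeSet, comap_adj, elimG_adj, Equiv.swap_apply_def, mem_coe,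
      mem_erase, mk_mem_deficiencyFinset] at he has ⊢
    have hsymm : ∀ x y, G.Adj x y → G.Adj y x := fun _ _ h => h.symm
    have := G.loopless.irrefl
    split_ifs at he <;> grind

lemma fillList_cons_map_swap_le {G : SimpleGraph V} {a b c s : V}
    (hN : G.neighborSet a = {b, c}) (hbc : b ≠ c) (hnbc : ¬ G.Adj b c) (hbs : G.Adj b s)
    (hsa : s ≠ a) (L : List V) :
    fillList G (a :: L.map (Equiv.swap a b)) ≤ fillList G (b :: L) := by
  have hadj := adj_iff_of_neighborSet_eq_pair hN
  have hmem : s(a, s) ∈ deficiencyFinset G b := by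
    refine mk_mem_deficiencyFinset.2 ⟨hsa.symm, ((hadj b).2 (Or.inl rfl)).symm, hbs, ?_⟩
    rw [hadj]
    rintro (rfl | rfl)
    exacts [hbs.ne rfl, hnbc hbs]
  have hrelabel : fillList (elimG G a) (L.map (Equiv.swap a b)) =
      fillList ((elimG G a).comap (Equiv.swap a b)) L :=
    fillList_map_iso (Iso.comap (Equiv.swap a b) (elimG G a)) L
  have hmono := fillList_le_of_le (comap_swap_elimG_le hN) (edgeSet_elimG_sdiff_subset hN hbs hsa) L
  rw [card_erase_of_mem hmem] at hmono
  have := card_pos.2 ⟨_, hmem⟩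
  rw [fillList, fillList, deficiencyFinset_eq_singleton hN hbc hnbc, card_singleton, hrelabel]
  omega

lemma one_add_minFillIn_elimG_le_fillList_cons_self {G : SimpleGraph V} {a x y : V}
    {L : List V} (hN : G.neighborSet a = {x, y}) (hxy : x ≠ y) (hnxy : ¬ G.Adj x y)
    (hL : IsOrdering (a :: L)) : 1 + minFillIn (elimG G a) ≤ fillList G (a :: L) := by
  rw [fillList, deficiencyFinset_eq_singleton hN hxy hnxy, card_singleton]
  exact Nat.add_le_add_left (minFillIn_elimG_le_fillList hL) 1

lemma one_add_minFillIn_elimG_le_fillList_cons_of_adj {G : SimpleGraph V} {a b c : V} {L : List V}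
    (hN : G.neighborSet a = {b, c}) (hbc : b ≠ c) (hnbc : ¬ G.Adj b c)
    (hr : (deleteSet G {a}).Reachable b c) (hL : IsOrdering (b :: L)) :
    1 + minFillIn (elimG G a) ≤ fillList G (b :: L) := by
  obtain ⟨s, hbs, hsa⟩ : ∃ s, G.Adj b s ∧ s ≠ a := by
    obtain ⟨W⟩ := hr
    cases W with
    | nil => exact (hbc rfl).elim
    | cons h _ => exact ⟨_, h.1, h.2.2⟩
  have hL' : IsOrdering (a :: L.map (Equiv.swap a b)) := by
    simpa using hL.map (Equiv.swap a b)
  exact (one_add_minFillIn_elimG_le_fillList_cons_self hN hbc hnbc hL').trans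
    (fillList_cons_map_swap_le hN hbc hnbc hbs hsa L)

lemma deficiencyFinset_elimG_subset {G : SimpleGraph V} {a b : V} (hab : ¬ G.Adj a b) :
    deficiencyFinset (elimG G a) b ⊆ deficiencyFinset G b := by
  intro e he
  induction e using Sym2.ind with
  | _ u v =>
    obtain ⟨huv, ⟨-, -, hua, hbu⟩, ⟨-, -, hva, hbv⟩, hnuv⟩ :=
      mk_mem_deficiencyFinset.1 he
    replace hbu := hbu.resolve_right fun h => hab h.1
    replace hbv := hbv.resolve_right fun h => hab h.1
    exact mk_mem_deficiencyFinset.2 ⟨huv, hbu, hbv, fun h => hnuv ⟨huv, hua, hva, Or.inl h⟩⟩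

lemma card_deficiencyFinset_elimG_lt {G : SimpleGraph V} {a b x y : V} (hab : ¬ G.Adj a b)
    (hax : G.Adj a x) (hay : G.Adj a y) (hbx : G.Adj b x) (hby : G.Adj b y) (hxy : x ≠ y)
    (hnxy : ¬ G.Adj x y) :
    #(deficiencyFinset (elimG G a) b) < #(deficiencyFinset G b) := by
  refine card_lt_card ((ssubset_iff_of_subset (deficiencyFinset_elimG_subset hab)).2
    ⟨s(x, y), mk_mem_deficiencyFinset.2 ⟨hxy, hbx, hby, hnxy⟩, fun h => ?_⟩)
  exact (mk_mem_deficiencyFinset.1 h).2.2.2 ⟨hxy, hax.ne', hay.ne', Or.inr ⟨hax, hay⟩⟩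

omit [Fintype V] [DecidableEq V] in
lemma isSimplicial_of_neighborSet_eq_pair {G : SimpleGraph V} {a x y : V}
    (hN : G.neighborSet a = {x, y}) (hxy : G.Adj x y) : IsSimplicial G a := by
  intro u v hu hv huv
  rw [← mem_neighborSet, hN] at hu hv
  rcases hu with rfl | rfl <;> rcases hv with rfl | rfl
  exacts [(huv rfl).elim, hxy, hxy.symm, (huv rfl).elim]

theorem one_add_minFillIn_elimG_le {G : SimpleGraph V} {a x y : V}
    (hN : G.neighborSet a = {x, y}) (hxy : x ≠ y) (hnxy : ¬ G.Adj x y)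
    (hr : (deleteSet G {a}).Reachable x y) : 1 + minFillIn (elimG G a) ≤ minFillIn G := by
  induction hn : G.support.ncard using Nat.strong_induction_on generalizing G with
  | _ n ih =>
  have hadj := adj_iff_of_neighborSet_eq_pair hN
  have hax : G.Adj a x := (hadj x).2 (Or.inl rfl)
  have hay : G.Adj a y := (hadj y).2 (Or.inr rfl)
  obtain ⟨b, L, hL, hfill, hb⟩ :=
    exists_minFillIn_eq_fillList_cons ⟨a, (mem_support G).2 ⟨x, hax⟩⟩
  rw [← hfill]
  by_cases hba : b = a
  · subst hba
    exact one_add_minFillIn_elimG_le_fillList_cons_self hN hxy hnxy hL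
  by_cases hbx : b = x
  · subst hbx
    exact one_add_minFillIn_elimG_le_fillList_cons_of_adj hN hxy hnxy hr hL
  by_cases hby : b = y
  · subst hby
    exact one_add_minFillIn_elimG_le_fillList_cons_of_adj (Set.pair_comm x b ▸ hN) hxy.symm
      (fun h => hnxy h.symm) hr.symm hL
  have hab : ¬ G.Adj a b := by rw [hadj]; tauto
  have hN' : (elimG G b).neighborSet a = {x, y} := by
    rw [neighborSet_elimG_of_not_adj hab hba, hN, Set.sdiff_singleton_eq_self]
    simp [hbx, hby]
  have hpivot := minFillIn_le_card_deficiencyFinset_add (elimG G a) b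
  rw [elimG_comm] at hpivot
  have htail := minFillIn_elimG_le_fillList (G := G) hL
  rw [fillList]
  by_cases hbxy : G.Adj b x ∧ G.Adj b y
  · have hsimp := isSimplicial_of_neighborSet_eq_pair hN'
      ⟨hxy, Ne.symm hbx, Ne.symm hby, Or.inr hbxy⟩
    have := card_deficiencyFinset_elimG_lt hab hax hay hbxy.1 hbxy.2 hxy hnxy
    have := hsimp.minFillIn_elimG_le
    omega
  · have hr' : (deleteSet (elimG G b) {a}).Reachable x y :=
      (reachable_elimG hr (Ne.symm hbx) (Ne.symm hby)).mono (elimG_deleteSet_le G {a} b)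
    have := ih _ (hn ▸ ncard_support_elimG_lt hb) hN'
      (fun ⟨_, _, _, h⟩ => h.elim hnxy hbxy) hr' rfl
    have := card_le_card (deficiencyFinset_elimG_subset hab)
    omega

/-- if `a` has degree 2, its two neighbors are non-adjacent, and `a`
is not a cut vertex, then eliminating `a` first extends to a minimum fill-in
ordering: `Φ(G) = 1 + Φ(G_a)`. -/
theorem stmt_11 (G : SimpleGraph V) (a : V)
    (hdeg : G.degree a = 2)
    (hnonadj : ∀ x y : V, G.Adj a x → G.Adj a y → x ≠ y → ¬ G.Adj x y)
    (hcut : ¬ ∃ u v : V, u ≠ a ∧ v ≠ a ∧ G.Reachable u v ∧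
      ¬ (deleteSet G {a}).Reachable u v) :
    minFillIn G = 1 + minFillIn (elimG G a) := by
  obtain ⟨x, y, hxy, hpair⟩ := card_eq_two.1 hdeg
  have hN : G.neighborSet a = {x, y} := by rw [← coe_neighborFinset, hpair, coe_pair]
  have hax : G.Adj a x := (adj_iff_of_neighborSet_eq_pair hN x).2 (Or.inl rfl)
  have hay : G.Adj a y := (adj_iff_of_neighborSet_eq_pair hN y).2 (Or.inr rfl)
  have hnxy := hnonadj x y hax hay hxy
  have hr : (deleteSet G {a}).Reachable x y := by
    by_contra h
    exact hcut ⟨x, y, hax.ne', hay.ne', hax.symm.reachable.trans hay.reachable, h⟩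
  have hle := minFillIn_le_card_deficiencyFinset_add G a
  rw [deficiencyFinset_eq_singleton hN hxy hnxy, card_singleton] at hle
  exact le_antisymm hle (one_add_minFillIn_elimG_le hN hxy hnxy hr)
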